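/- Let p be an odd prime, l ≥ 1, α ∈ ℤ_p^×, and let ψ be an additive character of ℚ_p that is trivial on pℤ_p. Define s = (s₁, …, s_{2l}) by s_i = 1 for 1 ≤ i ≤ l−1, s_l = 2α, s_i = −1 for l+1 ≤ i ≤ 2l−1, and s_{2l} = 2; define s′ = (s′₁, …, s′_{2l}) by s′_i = 1 for 1 ≤ i ≤ 2l−1 and s′_{2l} = (−1)^{l+1}·4α. Then there exists a diagonal matrix t ∈ GL_{2l}(ℤ_p) with all diagonal entries in ℤ_p^× such that for every g in the pro-unipotent Iwahori subgroup I⁺ of GL_{2l}(ℤ_p), one has t·g·t⁻¹ ∈ I⁺ and λ_s(t·g·t⁻¹) = λ_{s′}(g). -/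
import Mathlib

/-- The pro-unipotent Iwahori subgroup `I⁺` of `GL_n(ℤ_p)`: invertible matrices over `ℤ_p`
whose diagonal entries are `≡ 1 mod p` and whose below-diagonal entries are `≡ 0 mod p`. -/
def IwahoriPlus (p : ℕ) [Fact p.Prime] (n : ℕ) (g : Matrix (Fin n) (Fin n) ℤ_[p]) : Prop :=
  IsUnit g.det ∧ (∀ i : Fin n, (p : ℤ_[p]) ∣ (g i i - 1)) ∧
    ∀ i j : Fin n, (j : ℕ) < (i : ℕ) → (p : ℤ_[p]) ∣ g i j

/-- The affine generic character `λ_s(g) = ψ(s₁g₁₂ + ⋯ + s_{n−1}g_{n−1,n} + s_n p⁻¹ g_{n,1})`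
attached to `s ∈ ℤ_p^n` and an additive character `ψ` of `ℚ_p`. -/
noncomputable def affineChar (p : ℕ) [Fact p.Prime] (n : ℕ) (hn : 2 ≤ n)
    (ψ : AddChar ℚ_[p] ℂˣ) (s : Fin n → ℤ_[p]) (g : Matrix (Fin n) (Fin n) ℤ_[p]) : ℂˣ :=
  ψ ((∑ i : Fin (n - 1),
        ((s ⟨i, by have := i.isLt; omega⟩ : ℚ_[p]) *
          ((g ⟨i, by have := i.isLt; omega⟩ ⟨(i : ℕ) + 1, by have := i.isLt; omega⟩ : ℤ_[p]) :
            ℚ_[p]))) +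
      (s ⟨n - 1, by omega⟩ : ℚ_[p]) * ((p : ℚ_[p]))⁻¹ *
        ((g ⟨n - 1, by omega⟩ ⟨0, by omega⟩ : ℤ_[p]) : ℚ_[p]))

/-- For `p` odd and `α ∈ ℤ_p^×`, the affine generic character attached to the tuple
`s = (1, …, 1, 2α, −1, …, −1, 2)` is conjugate, by a diagonal matrix with unit entries, to
the affine generic character attached to `s′ = (1, …, 1, (−1)^{l+1}·4α)`. -/
theorem affineChar_diagonal_conjugate (p : ℕ) [Fact p.Prime] (hp : Odd p)
    (l : ℕ) (hl : 1 ≤ l) (α : ℤ_[p]ˣ)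
    (ψ : AddChar ℚ_[p] ℂˣ) (hψ : ∀ x : ℤ_[p], ψ ((p : ℚ_[p]) * (x : ℚ_[p])) = 1)
    (s s' : Fin (2 * l) → ℤ_[p])
    (hs : ∀ i : Fin (2 * l), s i =
      if (i : ℕ) < l - 1 then 1
      else if (i : ℕ) = l - 1 then 2 * (α : ℤ_[p])
      else if (i : ℕ) = 2 * l - 1 then 2 else -1)
    (hs' : ∀ i : Fin (2 * l), s' i =
      if (i : ℕ) = 2 * l - 1 then (-1) ^ (l + 1) * 4 * (α : ℤ_[p]) else 1) :
    ∃ d : Fin (2 * l) → ℤ_[p]ˣ,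
      ∀ g : Matrix (Fin (2 * l)) (Fin (2 * l)) ℤ_[p], IwahoriPlus p (2 * l) g →
        IwahoriPlus p (2 * l)
          (Matrix.diagonal (fun i => (d i : ℤ_[p])) * g *
            (Matrix.diagonal (fun i => (d i : ℤ_[p])))⁻¹) ∧
        affineChar p (2 * l) (by omega) ψ s
          (Matrix.diagonal (fun i => (d i : ℤ_[p])) * g *
            (Matrix.diagonal (fun i => (d i : ℤ_[p])))⁻¹) =
        affineChar p (2 * l) (by omega) ψ s' g := by
  classical
  have hpp : p.Prime := Fact.out
  have hp2 : p ≠ 2 := by rintro rfl; exact (by decide : ¬ Odd 2) hp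
  -- `2` is a unit in `ℤ_[p]`
  have h2 : IsUnit (2 : ℤ_[p]) := by
    rw [PadicInt.isUnit_iff]
    refine le_antisymm (PadicInt.norm_le_one _) (not_lt.mp ?_)
    rw [show (2 : ℤ_[p]) = ((2 : ℤ) : ℤ_[p]) by norm_cast,
      PadicInt.norm_int_lt_one_iff_dvd]
    intro h
    have h1 : p ∣ 2 := Int.ofNat_dvd.mp (by exact_mod_cast h)
    have h3 := Nat.le_of_dvd (by norm_num) h1
    have h4 := hpp.two_le
    exact hp2 (by omega)
  set u2 : ℤ_[p]ˣ := h2.unit with hu2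
  have hu2v : (u2 : ℤ_[p]) = 2 := h2.unit_spec
  -- the tuples as families of units
  have hc2 : ((2 : ℤ_[p]) : ℚ_[p]) = 2 := by
    rw [show (2 : ℤ_[p]) = ((2 : ℕ) : ℤ_[p]) by norm_cast, PadicInt.coe_natCast]
    norm_num
  have hc4 : ((4 : ℤ_[p]) : ℚ_[p]) = 4 := by
    rw [show (4 : ℤ_[p]) = ((4 : ℕ) : ℤ_[p]) by norm_cast, PadicInt.coe_natCast]
    norm_num
  set S : ℕ → ℤ_[p]ˣ := fun j =>
    if j < l - 1 then 1 else if j = l - 1 then u2 * α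
    else if j = 2 * l - 1 then u2 else -1 with hSdef
  set S' : ℕ → ℤ_[p]ˣ := fun j =>
    if j = 2 * l - 1 then (-1) ^ (l + 1) * u2 ^ 2 * α else 1 with hS'def
  set Sq : ℕ → ℚ_[p] := fun j => ((S j : ℤ_[p]) : ℚ_[p]) with hSqdef
  set S'q : ℕ → ℚ_[p] := fun j => ((S' j : ℤ_[p]) : ℚ_[p]) with hS'qdef
  have hSq_val : ∀ j : ℕ, Sq j =
      if j < l - 1 then 1 else if j = l - 1 then 2 * ((α : ℤ_[p]) : ℚ_[p])
      else if j = 2 * l - 1 then 2 else -1 := by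
    intro j
    simp only [hSqdef, hSdef]
    split_ifs <;>
      · simp only [Units.val_mul, Units.val_one, Units.val_neg, hu2v, PadicInt.coe_mul,
          PadicInt.coe_pow, PadicInt.coe_neg, PadicInt.coe_one, hc2]
        try push_cast
        try ring
  have hS'q_val : ∀ j : ℕ, S'q j =
      if j = 2 * l - 1 then (-1) ^ (l + 1) * 4 * ((α : ℤ_[p]) : ℚ_[p]) else 1 := by
    intro j
    simp only [hS'qdef, hS'def]
    split_ifs <;>
      · simp only [Units.val_mul, Units.val_pow_eq_pow_val, Units.val_one, Units.val_neg, hu2v,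
          PadicInt.coe_mul, PadicInt.coe_pow, PadicInt.coe_neg, PadicInt.coe_one, hc2]
        try push_cast
        try ring
  have hsq : ∀ i : Fin (2 * l), ((s i : ℤ_[p]) : ℚ_[p]) = Sq (i : ℕ) := by
    intro i
    rw [hs i, hSq_val]
    split_ifs <;> push_cast [hc2] <;> ring
  have hs'q : ∀ i : Fin (2 * l), ((s' i : ℤ_[p]) : ℚ_[p]) = S'q (i : ℕ) := by
    intro i
    rw [hs' i, hS'q_val]
    split_ifs <;> push_cast [hc2, hc4] <;> ring
  have hSqne : ∀ j, Sq j ≠ 0 := by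
    intro j
    simp only [hSqdef]
    rw [PadicInt.coe_ne_zero]
    exact (S j).ne_zero
  have hS'qne : ∀ j, S'q j ≠ 0 := by
    intro j
    simp only [hS'qdef]
    rw [PadicInt.coe_ne_zero]
    exact (S' j).ne_zero
  have hPne : ∀ m : ℕ, (∏ j ∈ Finset.range m, Sq j) ≠ 0 := fun m =>
    Finset.prod_ne_zero_iff.mpr fun j _ => hSqne j
  have hP'ne : ∀ m : ℕ, (∏ j ∈ Finset.range m, S'q j) ≠ 0 := fun m =>
    Finset.prod_ne_zero_iff.mpr fun j _ => hS'qne j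
  -- the two products coincide
  have key : ∏ j ∈ Finset.range (2 * l), Sq j = ∏ j ∈ Finset.range (2 * l), S'q j := by
    have hL : ∏ j ∈ Finset.range (2 * l), Sq j
        = (-1) ^ (l - 1) * 4 * ((α : ℤ_[p]) : ℚ_[p]) := by
      rw [show 2 * l = (2 * l - 1) + 1 by omega, Finset.prod_range_succ,
        ← Finset.prod_range_mul_prod_Ico Sq (show l ≤ 2 * l - 1 by omega)]
      have e1 : ∏ j ∈ Finset.range l, Sq j = 2 * ((α : ℤ_[p]) : ℚ_[p]) := by
        rw [show l = (l - 1) + 1 by omega, Finset.prod_range_succ,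
          Finset.prod_eq_one (fun j hj => by
            rw [hSq_val, if_pos (Finset.mem_range.mp hj)]), one_mul, hSq_val]
        rw [if_neg (lt_irrefl _), if_pos rfl]
      have e2 : ∏ j ∈ Finset.Ico l (2 * l - 1), Sq j = (-1 : ℚ_[p]) ^ (l - 1) := by
        have h1 : ∏ j ∈ Finset.Ico l (2 * l - 1), Sq j
            = ∏ _j ∈ Finset.Ico l (2 * l - 1), (-1 : ℚ_[p]) :=
          Finset.prod_congr rfl fun j hj => by
            rw [Finset.mem_Ico] at hj
            rw [hSq_val, if_neg (by omega), if_neg (by omega), if_neg (by omega)]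
        rw [h1, Finset.prod_const, Nat.card_Ico, show 2 * l - 1 - l = l - 1 by omega]
      have e3 : Sq (2 * l - 1) = 2 := by
        rw [hSq_val, if_neg (by omega), if_neg (by omega), if_pos rfl]
      rw [e1, e2, e3]
      ring
    have hR : ∏ j ∈ Finset.range (2 * l), S'q j
        = (-1) ^ (l + 1) * 4 * ((α : ℤ_[p]) : ℚ_[p]) := by
      rw [show 2 * l = (2 * l - 1) + 1 by omega, Finset.prod_range_succ,
        Finset.prod_eq_one (fun j hj => by
          rw [hS'q_val, if_neg (by have := Finset.mem_range.mp hj; omega)]), one_mul,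
        hS'q_val, if_pos rfl]
    rw [hL, hR, show l + 1 = (l - 1) + 2 by omega, pow_add]
    ring
  -- the conjugating diagonal element
  set D : Fin (2 * l) → ℤ_[p]ˣ := fun i =>
    (∏ j ∈ Finset.range (i : ℕ), S j) * (∏ j ∈ Finset.range (i : ℕ), S' j)⁻¹ with hDdef
  have φcast : ∀ m : ℕ,
      (((∏ j ∈ Finset.range m, S j : ℤ_[p]ˣ) : ℤ_[p]) : ℚ_[p]) = ∏ j ∈ Finset.range m, Sq j := by
    intro m
    calc (((∏ j ∈ Finset.range m, S j : ℤ_[p]ˣ) : ℤ_[p]) : ℚ_[p])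
        = (PadicInt.Coe.ringHom : ℤ_[p] →+* ℚ_[p])
            ((Units.coeHom ℤ_[p]) (∏ j ∈ Finset.range m, S j)) := rfl
      _ = ∏ j ∈ Finset.range m,
            (PadicInt.Coe.ringHom : ℤ_[p] →+* ℚ_[p]) ((Units.coeHom ℤ_[p]) (S j)) := by
          rw [map_prod, map_prod]
      _ = ∏ j ∈ Finset.range m, Sq j := rfl
  have φ'cast : ∀ m : ℕ,
      (((∏ j ∈ Finset.range m, S' j : ℤ_[p]ˣ) : ℤ_[p]) : ℚ_[p]) = ∏ j ∈ Finset.range m, S'q j := by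
    intro m
    calc (((∏ j ∈ Finset.range m, S' j : ℤ_[p]ˣ) : ℤ_[p]) : ℚ_[p])
        = (PadicInt.Coe.ringHom : ℤ_[p] →+* ℚ_[p])
            ((Units.coeHom ℤ_[p]) (∏ j ∈ Finset.range m, S' j)) := rfl
      _ = ∏ j ∈ Finset.range m,
            (PadicInt.Coe.ringHom : ℤ_[p] →+* ℚ_[p]) ((Units.coeHom ℤ_[p]) (S' j)) := by
          rw [map_prod, map_prod]
      _ = ∏ j ∈ Finset.range m, S'q j := rfl
  -- casting a unit inverse to `ℚ_p` gives the field inverse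
  have hinvq : ∀ u : ℤ_[p]ˣ, (((u⁻¹ : ℤ_[p]ˣ) : ℤ_[p]) : ℚ_[p]) = (((u : ℤ_[p]) : ℚ_[p]))⁻¹ := by
    intro u
    have h1 : ((u : ℤ_[p]) : ℚ_[p]) * (((u⁻¹ : ℤ_[p]ˣ) : ℤ_[p]) : ℚ_[p]) = 1 := by
      rw [← PadicInt.coe_mul, Units.mul_inv, PadicInt.coe_one]
    exact (inv_eq_of_mul_eq_one_right h1).symm
  have hDq : ∀ i : Fin (2 * l), (((D i : ℤ_[p])) : ℚ_[p])
      = (∏ j ∈ Finset.range (i : ℕ), Sq j) * (∏ j ∈ Finset.range (i : ℕ), S'q j)⁻¹ := by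
    intro i
    simp only [hDdef]
    rw [Units.val_mul, PadicInt.coe_mul, φcast, hinvq, φ'cast]
  -- key identity for consecutive indices
  have hA : ∀ a b : Fin (2 * l), (b : ℕ) = (a : ℕ) + 1 →
      ((s a : ℤ_[p]) : ℚ_[p]) * (((D a : ℤ_[p]) : ℚ_[p]) * (((D b : ℤ_[p]) : ℚ_[p]))⁻¹)
        = ((s' a : ℤ_[p]) : ℚ_[p]) := by
    intro a b hb
    rw [hsq, hs'q, hDq, hDq, hb, Finset.prod_range_succ, Finset.prod_range_succ]
    have n1 := hSqne (a : ℕ)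
    have n2 := hS'qne (a : ℕ)
    have n3 := hPne (a : ℕ)
    have n4 := hP'ne (a : ℕ)
    field_simp
  -- wrap-around identity
  have hwrap : ∀ (a z : Fin (2 * l)), (a : ℕ) = 2 * l - 1 → (z : ℕ) = 0 →
      ((s a : ℤ_[p]) : ℚ_[p]) * (((D a : ℤ_[p]) : ℚ_[p]) * (((D z : ℤ_[p]) : ℚ_[p]))⁻¹)
        = ((s' a : ℤ_[p]) : ℚ_[p]) := by
    intro a z ha hz
    have hDz : ((D z : ℤ_[p]) : ℚ_[p]) = 1 := by
      rw [hDq, hz]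
      simp
    have key2 : (∏ j ∈ Finset.range (2 * l - 1), Sq j) * Sq (2 * l - 1)
        = (∏ j ∈ Finset.range (2 * l - 1), S'q j) * S'q (2 * l - 1) := by
      have := key
      rwa [show 2 * l = (2 * l - 1) + 1 by omega, Finset.prod_range_succ,
        Finset.prod_range_succ] at this
    rw [hsq, hs'q, hDq, hDz, ha]
    rw [inv_one, mul_one]
    have n1 := hSqne (2 * l - 1)
    have n2 := hS'qne (2 * l - 1)
    have n3 := hPne (2 * l - 1)
    have n4 := hP'ne (2 * l - 1)
    field_simp
    linear_combination key2
  refine ⟨D, fun g hg => ?_⟩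
  -- the inverse of the diagonal matrix
  have hMinv : (Matrix.diagonal fun i => (D i : ℤ_[p]))⁻¹
      = Matrix.diagonal fun i => (((D i)⁻¹ : ℤ_[p]ˣ) : ℤ_[p]) := by
    apply Matrix.inv_eq_right_inv
    rw [Matrix.diagonal_mul_diagonal]
    have : (fun i => (D i : ℤ_[p]) * (((D i)⁻¹ : ℤ_[p]ˣ) : ℤ_[p]))
        = fun _ : Fin (2 * l) => (1 : ℤ_[p]) := funext fun i => Units.mul_inv _
    rw [this, Matrix.diagonal_one]
  have hentry : ∀ i j : Fin (2 * l),
      (Matrix.diagonal (fun i => (D i : ℤ_[p])) * g *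
        (Matrix.diagonal (fun i => (D i : ℤ_[p])))⁻¹) i j
      = (D i : ℤ_[p]) * g i j * (((D j)⁻¹ : ℤ_[p]ˣ) : ℤ_[p]) := by
    intro i j
    rw [hMinv, Matrix.mul_diagonal, Matrix.diagonal_mul]
  constructor
  · refine ⟨?_, ?_, ?_⟩
    · rw [Matrix.det_mul, Matrix.det_mul, hMinv, Matrix.det_diagonal, Matrix.det_diagonal]
      have hu : ∀ f : Fin (2 * l) → ℤ_[p]ˣ, IsUnit (∏ i, (f i : ℤ_[p])) := fun f =>
        ⟨∏ i, f i, by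
          rw [show ((∏ i, f i : ℤ_[p]ˣ) : ℤ_[p]) = (Units.coeHom ℤ_[p]) (∏ i, f i) from rfl,
            map_prod]
          rfl⟩
      exact ((hu D).mul hg.1).mul (hu fun i => (D i)⁻¹)
    · intro i
      rw [hentry]
      have e : (D i : ℤ_[p]) * g i i * (((D i)⁻¹ : ℤ_[p]ˣ) : ℤ_[p]) = g i i := by
        have h1 := Units.mul_inv (D i)
        linear_combination g i i * h1
      rw [e]
      exact hg.2.1 i
    · intro i j hij
      rw [hentry]
      exact ((hg.2.2 i j hij).mul_left _).mul_right _
  · simp only [affineChar]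
    congr 1
    simp only [hentry]
    congr 1
    · apply Finset.sum_congr rfl
      intro i _
      have hi := i.isLt
      have h := hA ⟨(i : ℕ), by omega⟩ ⟨(i : ℕ) + 1, by omega⟩ rfl
      push_cast [PadicInt.coe_mul, hinvq] at h ⊢
      linear_combination ((g ⟨(i : ℕ), by omega⟩ ⟨(i : ℕ) + 1, by omega⟩ : ℤ_[p]) : ℚ_[p]) * h
    · have h := hwrap ⟨2 * l - 1, by omega⟩ ⟨0, by omega⟩ rfl rfl
      push_cast [PadicInt.coe_mul, hinvq] at h ⊢
      linear_combination (((p : ℚ_[p]))⁻¹ *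
        ((g ⟨2 * l - 1, by omega⟩ ⟨0, by omega⟩ : ℤ_[p]) : ℚ_[p])) * h
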